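/- For ξ_s < 0 and fixed real parameters t_z, t_ζ, the function H(r) = −4ξ_s exp(2πξ_s[(1+β)r² + (1−β)(t_z − t_ζ)² + 2ir(t_z + t_ζ + β(t_z − t_ζ))]) has inverse Fourier transform F⁻¹H(ξ_r) = (2√2 √(−ξ_s)/√(1+β)) · exp(4πξ_s (t_z + ξ_r/(4ξ_s))²) · exp((4πξ_s(1−β)/(1+β)) (t_ζ + ξ_r/(4ξ_s))²). -/

import Mathlib

/-! Writing the exponent of `H(r) e^{2πirξ_r}` as `-a r² + i b r + c` with
`a = -2πξ_s(1+β) > 0`, the Gaussian integral gives `√(π/a) · e^{c - b²/(4a)}`; the rest is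
completing the square in `t_z` and `t_ζ`. -/

open MeasureTheory Real Complex

theorem integral_cexp_neg_mul_sq_add_I_mul_add {a : ℝ} (ha : 0 < a) (b c : ℝ) :
    ∫ r : ℝ, cexp (-a * r ^ 2 + I * b * r + c) =
      ((√(π / a) * Real.exp (c - b ^ 2 / (4 * a)) : ℝ) : ℂ) := by
  have hre : (-(a : ℂ)).re < 0 := by simpa using ha
  rw [integral_cexp_quadratic hre, neg_neg, ofReal_mul, ofReal_exp, sqrt_eq_rpow,
    ofReal_cpow (div_pos pi_pos ha).le]
  push_cast
  congr 2
  rw [mul_pow, I_sq]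
  ring

theorem four_mul_mul_sqrt_pi_div {u v : ℝ} (hu : 0 < u) (hv : 0 < v) :
    4 * u * √(π / (2 * π * u * v)) = 2 * √2 * √u / √v := by
  have hπ : π / (2 * π * u * v) = (2 * u * v)⁻¹ := by field_simp
  rw [hπ, sqrt_inv, sqrt_mul (by positivity), sqrt_mul zero_le_two]
  field_simp
  rw [sq_sqrt zero_le_two, sq_sqrt hu.le]
  ring

theorem sub_sq_div_eq_sq_add_sq {s β : ℝ} (hs : s ≠ 0) (hβ : 1 + β ≠ 0) (tz tζ ξ : ℝ) :
    2 * π * s * ((1 - β) * (tz - tζ) ^ 2)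
        - (4 * π * s * (tz + tζ + β * (tz - tζ)) + 2 * π * ξ) ^ 2
          / (4 * (2 * π * -s * (1 + β))) =
      4 * π * s * (tz + ξ / (4 * s)) ^ 2
        + 4 * π * s * (1 - β) / (1 + β) * (tζ + ξ / (4 * s)) ^ 2 := by
  have := pi_ne_zero
  field_simp
  ring

theorem inverse_fourier_of_H (β : ℝ) (hβ0 : 0 ≤ β)
    (ξs : ℝ) (hξs : ξs < 0) (tz tζ ξr : ℝ) :
    (∫ r : ℝ,
        (-4 * ξs : ℂ) *
          Complex.exp ((2 * Real.pi * ξs : ℂ) *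
            (((1 + β) * r ^ 2 + (1 - β) * (tz - tζ) ^ 2 : ℝ)
              + 2 * Complex.I * r * ((tz + tζ + β * (tz - tζ) : ℝ) : ℂ))) *
          Complex.exp (2 * Real.pi * Complex.I * r * ξr)) =
      ((2 * Real.sqrt 2 * Real.sqrt (-ξs) / Real.sqrt (1 + β) : ℝ) : ℂ) *
        Complex.exp (((4 * Real.pi * ξs * (tz + ξr / (4 * ξs)) ^ 2 : ℝ) : ℂ)) *
        Complex.exp (((4 * Real.pi * ξs * (1 - β) / (1 + β) * (tζ + ξr / (4 * ξs)) ^ 2 : ℝ) : ℂ)) := by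
  have hs : 0 < -ξs := neg_pos.mpr hξs
  have hβ : 0 < 1 + β := by linarith
  set a := 2 * π * -ξs * (1 + β)
  set b := 4 * π * ξs * (tz + tζ + β * (tz - tζ)) + 2 * π * ξr
  set c := 2 * π * ξs * ((1 - β) * (tz - tζ) ^ 2)
  calc _ = (-4 * ξs : ℂ) * ∫ r : ℝ, cexp (-a * r ^ 2 + I * b * r + c) := by
        rw [← integral_const_mul]
        congr 1 with r
        rw [mul_assoc, ← Complex.exp_add]
        push_cast [a, b, c]
        ring_nf
    _ = ((4 * -ξs * √(π / a) * Real.exp (c - b ^ 2 / (4 * a)) : ℝ) : ℂ) := by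
        rw [integral_cexp_neg_mul_sq_add_I_mul_add (by positivity)]
        push_cast
        ring
    _ = _ := by
        rw [four_mul_mul_sqrt_pi_div hs hβ, sub_sq_div_eq_sq_add_sq hξs.ne hβ.ne', Real.exp_add]
        push_cast
        ring
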